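/- arXiv:cs/0207026 — 2 statements merged into one kernel-verified Lean document; each statement's English description precedes it below -/
import Mathlib

section
/- Let A be a sequence of pairs (a_k, w_k) with w_k > 0. If segment A(x,y) is not right-skew, let A(x,k) be the longest right-skew segment beginning at index x (with k < y). Then the decreasingly right-skew partition of A(x,y) equals A(x,k) followed by the decreasingly right-skew partition of A(k+1,y). -/
noncomputable def density (a w : ℕ → ℝ) (i j : ℕ) : ℝ :=
  (∑ t ∈ Finset.Icc i j, a t) / (∑ t ∈ Finset.Icc i j, w t)

def RightSkew (a w : ℕ → ℝ) (i k : ℕ) : Prop :=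
  ∀ j, i ≤ j → j < k → density a w i j ≤ density a w (j + 1) k

def IsDRSP (a w : ℕ → ℝ) (x y : ℕ) (segs : List (ℕ × ℕ)) : Prop :=
  segs ≠ [] ∧
  segs.head?.map Prod.fst = some x ∧
  segs.getLast?.map Prod.snd = some y ∧
  (∀ s ∈ segs, s.1 ≤ s.2 ∧ RightSkew a w s.1 s.2) ∧
  segs.Chain' (fun s t => t.1 = s.2 + 1 ∧ density a w t.1 t.2 < density a w s.1 s.2)

lemma sum_Icc_split (f : ℕ → ℝ) {i j m : ℕ} (hij : i ≤ j) (hjm : j < m) :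
    ∑ t ∈ Finset.Icc i m, f t =
      (∑ t ∈ Finset.Icc i j, f t) + ∑ t ∈ Finset.Icc (j + 1) m, f t := by
  rw [← Finset.Ico_add_one_right_eq_Icc, ← Finset.Ico_add_one_right_eq_Icc, ← Finset.Ico_add_one_right_eq_Icc,
    Finset.sum_Ico_consecutive f (by omega : i ≤ j + 1) (by omega : j + 1 ≤ m + 1)]

lemma Wpos (w : ℕ → ℝ) (hw : ∀ t, 0 < w t) {i j : ℕ} (h : i ≤ j) :
    0 < ∑ t ∈ Finset.Icc i j, w t :=
  Finset.sum_pos (fun t _ => hw t) (Finset.nonempty_Icc.2 h)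

lemma density_le_of (a w : ℕ → ℝ) (hw : ∀ t, 0 < w t) {i j m : ℕ} {c : ℝ}
    (hij : i ≤ j) (hjm : j < m)
    (h1 : density a w i j ≤ c) (h2 : density a w (j + 1) m ≤ c) :
    density a w i m ≤ c := by
  have W1 := Wpos w hw hij
  have W2 := Wpos w hw (show j + 1 ≤ m by omega)
  have hA := sum_Icc_split a hij hjm
  have hW := sum_Icc_split w hij hjm
  unfold density at *
  rw [div_le_iff₀ W1] at h1
  rw [div_le_iff₀ W2] at h2
  rw [hA, hW, div_le_iff₀ (by linarith)]
  nlinarith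

lemma le_density_of (a w : ℕ → ℝ) (hw : ∀ t, 0 < w t) {i j m : ℕ} {c : ℝ}
    (hij : i ≤ j) (hjm : j < m)
    (h1 : c ≤ density a w i j) (h2 : c ≤ density a w (j + 1) m) :
    c ≤ density a w i m := by
  have W1 := Wpos w hw hij
  have W2 := Wpos w hw (show j + 1 ≤ m by omega)
  have hA := sum_Icc_split a hij hjm
  have hW := sum_Icc_split w hij hjm
  unfold density at *
  rw [le_div_iff₀ W1] at h1
  rw [le_div_iff₀ W2] at h2
  rw [hA, hW, le_div_iff₀ (by linarith)]
  nlinarith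

lemma rightSkew_concat (a w : ℕ → ℝ) (hw : ∀ t, 0 < w t) {x k m : ℕ}
    (hxk : x ≤ k) (hkm : k < m)
    (h1 : RightSkew a w x k) (h2 : RightSkew a w (k + 1) m)
    (hd : density a w x k ≤ density a w (k + 1) m) : RightSkew a w x m := by
  intro j hxj hjm
  rcases lt_trichotomy j k with h | h | h
  · have e1 : density a w x j ≤ density a w (j + 1) k := h1 j hxj h
    have e2 : density a w x j ≤ density a w x k :=
      le_density_of a w hw hxj h le_rfl e1
    have e3 : density a w x j ≤ density a w (k + 1) m := e2.trans hd
    exact le_density_of a w hw (by omega : j + 1 ≤ k) hkm e1 e3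
  · subst h; exact hd
  · have e1 : density a w (k + 1) j ≤ density a w (j + 1) m := h2 j (by omega) hjm
    have e2 : density a w (k + 1) m ≤ density a w (j + 1) m :=
      density_le_of a w hw (by omega : k + 1 ≤ j) hjm e1 le_rfl
    have e3 : density a w x k ≤ density a w (j + 1) m := hd.trans e2
    exact density_le_of a w hw hxk h e3 e1

lemma head_snd_le (a w : ℕ → ℝ) (y : ℕ) : ∀ (segs : List (ℕ × ℕ)),
    segs.Chain' (fun s t => t.1 = s.2 + 1 ∧ density a w t.1 t.2 < density a w s.1 s.2) →
    (∀ s ∈ segs, s.1 ≤ s.2) →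
    segs.getLast?.map Prod.snd = some y →
    ∀ p ∈ segs.head?, p.2 ≤ y
  | [] => by simp
  | [p] => by
      intro _ _ hlast q hq
      simp at hlast hq
      subst hq
      omega
  | p :: q :: rest => by
      intro hc hall hlast r hr
      have ih := head_snd_le a w y (q :: rest) hc.tail
        (fun s hs => hall s (List.mem_cons_of_mem _ hs))
        (by rwa [List.getLast?_cons_cons] at hlast) q (by simp)
      have h1 := (List.isChain_cons_cons.1 hc).1.1
      have h2 := hall q (by simp)
      simp at hr
      subst hr
      omega

theorem drsp_decomp_left (a w : ℕ → ℝ) (hw : ∀ t, 0 < w t)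
    (x y k : ℕ) (hxy : x ≤ y)
    (hnot : ¬ RightSkew a w x y)
    (hxk : x ≤ k) (hky : k < y)
    (hrs : RightSkew a w x k)
    (hlongest : ∀ k', x ≤ k' → k' ≤ y → RightSkew a w x k' → k' ≤ k)
    (segs : List (ℕ × ℕ)) (hsegs : IsDRSP a w (k + 1) y segs) :
    IsDRSP a w x y ((x, k) :: segs) := by
  obtain ⟨hne, hhead, hlast, hall, hchain⟩ := hsegs
  obtain ⟨p, rest, rfl⟩ := List.exists_cons_of_ne_nil hne
  have hp1 : p.1 = k + 1 := by simpa using hhead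
  have hp := hall p (by simp)
  have hp2y : p.2 ≤ y :=
    head_snd_le a w y (p :: rest) hchain (fun s hs => (hall s hs).1) hlast p (by simp)
  have hdlt : density a w p.1 p.2 < density a w x k := by
    by_contra hle
    push_neg at hle
    have hrs2 : RightSkew a w (k + 1) p.2 := by rw [← hp1]; exact hp.2
    have hkp2 : k < p.2 := by omega
    have := hlongest p.2 (by omega) hp2y
      (rightSkew_concat a w hw hxk hkp2 hrs hrs2 (by rwa [hp1] at hle))
    omega
  refine ⟨by simp, by simp, ?_, ?_, ?_⟩
  · rw [List.getLast?_cons_cons]; exact hlast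
  · intro s hs
    rcases List.mem_cons.1 hs with h | h
    · subst h; exact ⟨hxk, hrs⟩
    · exact hall s h
  · exact List.isChain_cons_cons.2 ⟨⟨by omega, hdlt⟩, hchain⟩
end

section
/- Let A be a sequence of pairs (a_k, w_k) with w_k > 0, and consider two segments A(x_1, y) and A(x_2, y) sharing a right endpoint y. Let A(k, k') be a block of the decreasingly right-skew partition of A(x_1, y) and A(m, m') a block of the decreasingly right-skew partition of A(x_2, y). Then it cannot hold that k < m ≤ k' < m'. -/
section Mediant

variable {𝕜 : Type*} [Field 𝕜] [LinearOrder 𝕜] [IsStrictOrderedRing 𝕜] {a b c d e : 𝕜}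

theorem div_le_add_div_add (hb : 0 < b) (hd : 0 < d) (h : a / b ≤ c / d) :
    a / b ≤ (a + c) / (b + d) := by
  rw [div_le_div_iff₀ hb hd] at h
  rw [div_le_div_iff₀ hb (add_pos hb hd)]
  linarith

theorem add_div_add_le_div (hb : 0 < b) (hd : 0 < d) (h : a / b ≤ c / d) :
    (a + c) / (b + d) ≤ c / d := by
  rw [div_le_div_iff₀ hb hd] at h
  rw [div_le_div_iff₀ (add_pos hb hd) hd]
  linarith

theorem add_div_add_lt (hb : 0 < b) (hd : 0 < d) (hab : a / b < e) (hcd : c / d < e) :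
    (a + c) / (b + d) < e := by
  rw [div_lt_iff₀ hb] at hab
  rw [div_lt_iff₀ hd] at hcd
  rw [div_lt_iff₀ (add_pos hb hd)]
  linarith

end Mediant

theorem Finset.sum_Icc_consecutive {M : Type*} [AddCommMonoid M] (f : ℕ → M) {i j k : ℕ}
    (hij : i ≤ j + 1) (hjk : j ≤ k) :
    ∑ t ∈ Icc i j, f t + ∑ t ∈ Icc (j + 1) k, f t = ∑ t ∈ Icc i k, f t := by
  simp only [← Finset.Ico_add_one_right_eq_Icc]
  exact Finset.sum_Ico_consecutive f hij (by omega)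

section Density

variable {a w : ℕ → ℝ}

theorem sum_Icc_pos (hw : ∀ t, 0 < w t) {i j : ℕ} (hij : i ≤ j) :
    0 < ∑ t ∈ Finset.Icc i j, w t :=
  Finset.sum_pos (fun t _ => hw t) (Finset.nonempty_Icc.mpr hij)

theorem density_eq_add_div_add {i j k : ℕ} (hij : i ≤ j) (hjk : j < k) :
    density a w i k = ((∑ t ∈ Finset.Icc i j, a t) + ∑ t ∈ Finset.Icc (j + 1) k, a t) /
      ((∑ t ∈ Finset.Icc i j, w t) + ∑ t ∈ Finset.Icc (j + 1) k, w t) := by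
  rw [density, Finset.sum_Icc_consecutive a (by omega) hjk.le,
    Finset.sum_Icc_consecutive w (by omega) hjk.le]

theorem density_prefix_le_of_le (hw : ∀ t, 0 < w t) {i j k : ℕ} (hij : i ≤ j) (hjk : j < k)
    (h : density a w i j ≤ density a w (j + 1) k) :
    density a w i j ≤ density a w i k := by
  rw [density_eq_add_div_add hij hjk]
  exact div_le_add_div_add (sum_Icc_pos hw hij) (sum_Icc_pos hw hjk) h

theorem density_le_suffix_of_le (hw : ∀ t, 0 < w t) {i j k : ℕ} (hij : i ≤ j)
    (hjk : j < k) (h : density a w i j ≤ density a w (j + 1) k) :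
    density a w i k ≤ density a w (j + 1) k := by
  rw [density_eq_add_div_add hij hjk]
  exact add_div_add_le_div (sum_Icc_pos hw hij) (sum_Icc_pos hw hjk) h

theorem density_lt_of_split (hw : ∀ t, 0 < w t) {i j k : ℕ} {d : ℝ} (hij : i ≤ j)
    (hjk : j < k) (hl : density a w i j < d) (hr : density a w (j + 1) k < d) :
    density a w i k < d := by
  rw [density_eq_add_div_add hij hjk]
  exact add_div_add_lt (sum_Icc_pos hw hij) (sum_Icc_pos hw hjk) hl hr

namespace RightSkew

theorem density_prefix_le (hw : ∀ t, 0 < w t) {i j k : ℕ} (hs : RightSkew a w i k)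
    (hij : i ≤ j) (hjk : j ≤ k) :
    density a w i j ≤ density a w i k := by
  rcases hjk.eq_or_lt with rfl | hjk
  · exact le_rfl
  · exact density_prefix_le_of_le hw hij hjk (hs j hij hjk)

theorem density_le_suffix (hw : ∀ t, 0 < w t) {i j k : ℕ} (hs : RightSkew a w i k)
    (hij : i < j) (hjk : j ≤ k) :
    density a w i k ≤ density a w j k := by
  obtain ⟨j, rfl⟩ := Nat.exists_eq_add_one_of_ne_zero (Nat.ne_zero_of_lt hij)
  exact density_le_suffix_of_le hw (by omega) hjk (hs j (by omega) hjk)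

end RightSkew

theorem density_lt_of_isChain (hw : ∀ t, 0 < w t) {d : ℝ} :
    ∀ (p : ℕ × ℕ) (L : List (ℕ × ℕ)), (p :: L).IsChain (fun s t => t.1 = s.2 + 1) →
    (∀ q ∈ p :: L, q.1 ≤ q.2 ∧ RightSkew a w q.1 q.2) →
    (∀ q ∈ p :: L, density a w q.1 q.2 < d) →
    ∀ j, p.1 ≤ j → j ≤ ((p :: L).getLast (List.cons_ne_nil p L)).2 → density a w p.1 j < d
  | p, L, hchain, hblocks, hdens, j, hpj, hjL => by
    obtain ⟨hp, hskew⟩ := hblocks p List.mem_cons_self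
    have hdp := hdens p List.mem_cons_self
    by_cases hjp : j ≤ p.2
    · exact (hskew.density_prefix_le hw hpj hjp).trans_lt hdp
    match L, hchain, hjL with
    | [], _, hjL => exact absurd hjL hjp
    | q :: L, hchain, hjL =>
      have hq : q.1 = p.2 + 1 := (List.isChain_cons_cons.mp hchain).1
      have hrest : density a w q.1 j < d :=
        density_lt_of_isChain hw q L (List.isChain_cons_cons.mp hchain).2
          (fun r hr => hblocks r (List.mem_cons_of_mem p hr))
          (fun r hr => hdens r (List.mem_cons_of_mem p hr)) j (by omega)
          (by rwa [List.getLast_cons_cons] at hjL)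
      exact density_lt_of_split hw hp (by omega) hdp (hq ▸ hrest)

end Density

namespace IsDRSP

variable {a w : ℕ → ℝ} {x y : ℕ} {segs : List (ℕ × ℕ)}

theorem rightSkew_of_mem (h : IsDRSP a w x y segs) {s : ℕ × ℕ} (hs : s ∈ segs) :
    RightSkew a w s.1 s.2 :=
  (h.2.2.2.1 s hs).2

theorem snd_le_of_mem (h : IsDRSP a w x y segs) {s : ℕ × ℕ} (hs : s ∈ segs) : s.2 ≤ y := by
  obtain ⟨-, -, hlast, hblocks, hchain⟩ := h
  let R : ℕ × ℕ → ℕ × ℕ → Prop := fun s t => s.2 ≤ t.2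
  have : Trans R R R := ⟨le_trans⟩
  have : Std.Refl R := ⟨fun _ => le_rfl⟩
  have hsorted : segs.Pairwise R :=
    (hchain.imp_of_mem_imp fun s t _ ht hst => (hblocks t ht).1.trans' (by omega)).pairwise
  rw [List.getLast?_eq_some_getLast (List.ne_nil_of_mem hs)] at hlast
  exact (Option.some.inj hlast) ▸ hsorted.rel_getLast hs

theorem density_lt_of_mem (hw : ∀ t, 0 < w t) (h : IsDRSP a w x y segs) {p : ℕ × ℕ}
    (hp : p ∈ segs) {j : ℕ} (hpj : p.2 < j) (hjy : j ≤ y) :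
    density a w (p.2 + 1) j < density a w p.1 p.2 := by
  obtain ⟨-, -, hlast, hblocks, hchain⟩ := h
  obtain ⟨l₁, l₂, rfl⟩ := List.append_of_mem hp
  have hsuffix := hchain.suffix (List.suffix_append l₁ (p :: l₂))
  rw [List.getLast?_append_cons] at hlast
  cases l₂ with
  | nil =>
    simp only [List.getLast?_singleton, Option.map_some, Option.some.injEq] at hlast
    omega
  | cons q l₂ =>
    let R : ℕ × ℕ → ℕ × ℕ → Prop := fun s t => density a w t.1 t.2 < density a w s.1 s.2
    have : Trans R R R := ⟨fun h₁ h₂ => h₂.trans h₁⟩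
    have hlt : ∀ r ∈ q :: l₂, R p r := fun r hr => (hsuffix.imp fun _ _ h => h.2).rel_cons hr
    obtain ⟨⟨hq, -⟩, htail⟩ := List.isChain_cons_cons.mp hsuffix
    rw [List.getLast?_cons_cons, List.getLast?_eq_some_getLast (List.cons_ne_nil q l₂)] at hlast
    simp only [Option.map_some, Option.some.injEq] at hlast
    exact hq ▸ density_lt_of_isChain hw q l₂ (htail.imp fun _ _ h => h.1)
      (fun r hr => hblocks r (by simp [hr])) hlt j (by omega) (by omega)

end IsDRSP

theorem drsp_nest_common_right (a w : ℕ → ℝ) (hw : ∀ t, 0 < w t)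
    (x₁ x₂ y k k' m m' : ℕ)
    (segs₁ segs₂ : List (ℕ × ℕ))
    (h₁ : IsDRSP a w x₁ y segs₁) (h₂ : IsDRSP a w x₂ y segs₂)
    (hk : (k, k') ∈ segs₁) (hm : (m, m') ∈ segs₂) :
    ¬ (k < m ∧ m ≤ k' ∧ k' < m') := by
  rintro ⟨hkm, hmk', hk'm'⟩
  have hle : density a w k k' ≤ density a w (k' + 1) m' :=
    ((h₁.rightSkew_of_mem hk).density_le_suffix hw hkm hmk').trans
      (h₂.rightSkew_of_mem hm k' hmk' hk'm')
  have hlt : density a w (k' + 1) m' < density a w k k' :=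
    h₁.density_lt_of_mem hw hk hk'm' (h₂.snd_le_of_mem hm)
  exact hle.not_gt hlt
end
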